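/- For any two real symmetric n×n matrices X and Y, ⟨λ(X), λ(Y)⟩ ≥ tr(XY), where λ(·) denotes the vector of eigenvalues in nonincreasing order and the left side is the Euclidean inner product on ℝⁿ. -/

import Mathlib

/-!
Diagonalise `X = U diag(λ) Uᵀ` and `Y = V diag(μ) Vᵀ`. For the orthogonal matrix `W = UᵀV` one
gets `tr(XY) = λ ⬝ (W ⊙ W) μ`, and the entrywise square `W ⊙ W` of an orthogonal matrix is doubly
stochastic. By Birkhoff's theorem the linear function `M ↦ λ ⬝ M μ` is maximised over doubly
stochastic matrices at a permutation matrix, and by the rearrangement inequality every permuted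
pairing `λ ⬝ (μ ∘ σ)` is at most the pairing of the two vectors sorted in the same order.
-/

noncomputable def eigd {n : ℕ} (X : Matrix (Fin n) (Fin n) ℝ) : Fin n → ℝ :=
  if h : X.IsHermitian then
    fun i => h.eigenvalues (Tuple.sort h.eigenvalues i.rev)
  else 0

open Matrix

section

variable {n : Type*} [Fintype n] [DecidableEq n]

lemma hadamard_self_mem_doublyStochastic {W : Matrix n n ℝ} (hW : W ∈ unitaryGroup n ℝ) :
    W ⊙ W ∈ doublyStochastic ℝ n := by
  refine mem_doublyStochastic_iff_sum.2
    ⟨fun i j => mul_self_nonneg (W i j), fun i => ?_, fun j => ?_⟩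
  · simpa [mul_apply] using congr_fun₂ (mem_unitaryGroup_iff.1 hW) i i
  · simpa [mul_apply] using congr_fun₂ (mem_unitaryGroup_iff'.1 hW) j j

lemma exists_dotProduct_mulVec_le_of_mem_doublyStochastic {M : Matrix n n ℝ}
    (hM : M ∈ doublyStochastic ℝ n) (d e : n → ℝ) :
    ∃ σ : Equiv.Perm n, d ⬝ᵥ M *ᵥ e ≤ d ⬝ᵥ (e ∘ σ) := by
  rw [← SetLike.mem_coe, doublyStochastic_eq_convexHull_permMatrix] at hM
  have hlin : IsLinearMap ℝ fun A : Matrix n n ℝ => d ⬝ᵥ A *ᵥ e :=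
    ⟨fun A B => by simp [add_mulVec], fun c A => by simp [smul_mulVec]⟩
  obtain ⟨_, ⟨σ, rfl⟩, hσ⟩ := ((IsLinearMap.mk' _ hlin).convexOn convex_univ)
    |>.exists_ge_of_mem_convexHull (Set.subset_univ _) hM
  exact ⟨σ, by simpa [permMatrix_mulVec] using hσ⟩

lemma trace_diagonal_mul_mul_diagonal_mul_transpose {R : Type*} [CommSemiring R]
    (d e : n → R) (W : Matrix n n R) :
    (diagonal d * W * diagonal e * Wᵀ).trace = d ⬝ᵥ (W ⊙ W) *ᵥ e := by
  simp only [trace, diag, mul_apply (M := diagonal d * W * diagonal e), mul_diagonal,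
    diagonal_mul, transpose_apply, dotProduct, mulVec, hadamard_apply, Finset.mul_sum]
  exact Finset.sum_congr rfl fun i _ => Finset.sum_congr rfl fun j _ => by ring

lemma Matrix.IsHermitian.exists_trace_mul_eq_dotProduct_hadamard {X Y : Matrix n n ℝ}
    (hX : X.IsHermitian) (hY : Y.IsHermitian) :
    ∃ W ∈ unitaryGroup n ℝ, (X * Y).trace = hX.eigenvalues ⬝ᵥ (W ⊙ W) *ᵥ hY.eigenvalues := by
  set U : Matrix n n ℝ := (hX.eigenvectorUnitary : Matrix n n ℝ)
  set V : Matrix n n ℝ := (hY.eigenvectorUnitary : Matrix n n ℝ)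
  refine ⟨star U * V, (star hX.eigenvectorUnitary * hY.eigenvectorUnitary).2, ?_⟩
  have hX' : X = U * diagonal hX.eigenvalues * star U := by simpa using hX.spectral_theorem
  have hY' : Y = V * diagonal hY.eigenvalues * star V := by simpa using hY.spectral_theorem
  rw [← trace_diagonal_mul_mul_diagonal_mul_transpose, ← conjTranspose_eq_transpose_of_trivial]
  calc (X * Y).trace
      = (U * diagonal hX.eigenvalues * star U * (V * diagonal hY.eigenvalues * star V)).trace := by
        rw [← hX', ← hY']
    _ = _ := by
        simp only [star_eq_conjTranspose, conjTranspose_mul, conjTranspose_conjTranspose,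
          Matrix.mul_assoc]
        rw [trace_mul_comm]
        simp only [Matrix.mul_assoc]

end

lemma eigd_eq_comp {n : ℕ} {X : Matrix (Fin n) (Fin n) ℝ} (hX : X.IsHermitian) :
    eigd X = hX.eigenvalues ∘ Fin.revPerm.trans (Tuple.sort hX.eigenvalues) := by
  rw [eigd, dif_pos hX]
  rfl

lemma eigd_antitone {n : ℕ} {X : Matrix (Fin n) (Fin n) ℝ} (hX : X.IsHermitian) :
    Antitone (eigd X) := by
  intro i j hij
  rw [eigd_eq_comp hX]
  exact Tuple.monotone_sort _ (Fin.rev_le_rev.2 hij)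

lemma dotProduct_eigenvalues_comp_perm_le_eigd {n : ℕ} {X Y : Matrix (Fin n) (Fin n) ℝ}
    (hX : X.IsHermitian) (hY : Y.IsHermitian) (σ : Equiv.Perm (Fin n)) :
    hX.eigenvalues ⬝ᵥ (hY.eigenvalues ∘ σ) ≤ eigd X ⬝ᵥ eigd Y := by
  set τX := Fin.revPerm.trans (Tuple.sort hX.eigenvalues)
  set τY := Fin.revPerm.trans (Tuple.sort hY.eigenvalues)
  calc hX.eigenvalues ⬝ᵥ (hY.eigenvalues ∘ σ)
      = (hX.eigenvalues ∘ τX) ⬝ᵥ (hY.eigenvalues ∘ σ ∘ τX) :=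
        (comp_equiv_dotProduct_comp_equiv _ _ τX).symm
    _ = eigd X ⬝ᵥ (eigd Y ∘ (τX.trans σ).trans τY.symm) := by
        simp [eigd_eq_comp hX, eigd_eq_comp hY, τX, τY, Function.comp_def]
    _ ≤ eigd X ⬝ᵥ eigd Y :=
        ((eigd_antitone hX).monovary (eigd_antitone hY)).sum_mul_comp_perm_le_sum_mul

theorem statement7 {n : ℕ} (X Y : Matrix (Fin n) (Fin n) ℝ)
    (hX : X.IsHermitian) (hY : Y.IsHermitian) :
    (X * Y).trace ≤ ∑ i, eigd X i * eigd Y i := by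
  obtain ⟨W, hW, htrace⟩ := hX.exists_trace_mul_eq_dotProduct_hadamard hY
  obtain ⟨σ, hσ⟩ := exists_dotProduct_mulVec_le_of_mem_doublyStochastic
    (hadamard_self_mem_doublyStochastic hW) hX.eigenvalues hY.eigenvalues
  rw [htrace]
  exact hσ.trans (dotProduct_eigenvalues_comp_perm_le_eigd hX hY σ)
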